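/- arXiv:2205.08519 — 2 statements merged into one kernel-verified Lean document; each statement's English description precedes it below -/
import Mathlib

section
/- Let X and Y be complex Banach spaces, let E ⊆ X and T ⊆ Y be open subsets, and let φ : E × T → ℂ be a function such that (i) there is a constant M with |φ(x,t)| ≤ M for all x ∈ E and t ∈ T, (ii) for each fixed t ∈ T the function x ↦ φ(x,t) is holomorphic (analytic over ℂ) on E, and (iii) for each fixed x ∈ E the function t ↦ φ(x,t) is holomorphic on T. Then the induced map Φ : T → C_b(E, ℂ), defined by Φ(t) = φ(·, t), into the Banach space of bounded continuous complex-valued functions on E equipped with the supremum norm, is holomorphic (Fréchet differentiable over ℂ) on T. -/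
/-!
For `x ∈ E`, let `L x` be the derivative of `φ x` at `t₀ ∈ T`, and let `B(t₀, R) ⊆ T`. Schwarz's
lemma of order two gives `‖φ x (t₀ + h) - φ x t₀ - L x h‖ ≤ 4 M (‖h‖ / R) ^ 2`, and the Cauchy
estimate gives `‖L x‖ ≤ 2 M / R`. Both bounds involve only `M` and `R`, so they are uniform in `x`.
Hence each `x ↦ L x v` is a uniform limit of difference quotients of `Φ`, so it is continuous,
and `v ↦ (x ↦ L x v)` is the Fréchet derivative of `Φ` at `t₀` for the sup norm.
-/

open Metric Set Filter Topology NNReal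

namespace Complex

variable {E F : Type*} [NormedAddCommGroup E] [NormedSpace ℂ E] [NormedAddCommGroup F]
  [NormedSpace ℂ F] {f : E → F} {c z : E} {R M : ℝ}

theorem norm_fderiv_le_of_forall_mem_ball_norm_le (hd : DifferentiableOn ℂ f (ball c R))
    (hR : 0 < R) (hM : ∀ w ∈ ball c R, ‖f w‖ ≤ M) : ‖fderiv ℂ f c‖ ≤ 2 * M / R := by
  refine norm_fderiv_le_div_of_mapsTo_ball hd (fun w hw => ?_) hR
  rw [mem_closedBall, dist_eq_norm]
  linarith [norm_sub_le (f w) (f c), hM w hw, hM c (mem_ball_self hR)]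

theorem norm_sub_sub_fderiv_le_of_forall_mem_ball_norm_le (hd : DifferentiableOn ℂ f (ball c R))
    (hM : ∀ w ∈ ball c R, ‖f w‖ ≤ M) (hz : z ∈ ball c R) :
    ‖f z - f c - fderiv ℂ f c (z - c)‖ ≤ 4 * M * (dist z c / R) ^ 2 := by
  have hR : 0 < R := nonempty_ball.mp ⟨z, hz⟩
  set L := fderiv ℂ f c
  have hL : ‖L‖ ≤ 2 * M / R := norm_fderiv_le_of_forall_mem_ball_norm_le hd hR hM
  have hLc : HasFDerivAt f L c := (hd.differentiableAt (ball_mem_nhds c hR)).hasFDerivAt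
  -- Schwarz's lemma of order two, applied to `f` minus its linear part at `c`.
  set g : E → F := fun w => f w - f c - L (w - c)
  have hgd : DifferentiableOn ℂ g (ball c R) :=
    (hd.sub_const _).sub (L.differentiable.comp_differentiableOn (differentiableOn_id.sub_const c))
  have hgc : g c = 0 := by simp [g]
  have hg_maps : MapsTo g (ball c R) (closedBall (g c) (4 * M)) := by
    intro w hw
    have hLw : ‖L (w - c)‖ ≤ 2 * M := by
      calc ‖L (w - c)‖ ≤ 2 * M / R * ‖w - c‖ := L.le_of_opNorm_le hL _
        _ ≤ 2 * M / R * R := by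
          gcongr
          · exact (norm_nonneg _).trans hL
          · exact (mem_ball_iff_norm.mp hw).le
        _ = 2 * M := by field_simp
    rw [mem_closedBall, hgc, dist_zero_right]
    linarith [norm_sub_le (f w - f c) (L (w - c)), norm_sub_le (f w) (f c), hM w hw,
      hM c (mem_ball_self hR)]
  have hg_o : (g · - g c) =o[𝓝 c] (fun w => ‖w - c‖ ^ 1) := by
    simpa [hgc, g] using hLc.isLittleO
  simpa [hgc, g] using dist_le_mul_div_pow_of_mapsTo_ball_of_isLittleO hgd hg_maps hg_o hz

end Complex

namespace BoundedContinuousFunction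

variable {α 𝕜 Y F : Type*} [TopologicalSpace α] [NontriviallyNormedField 𝕜]
  [NormedAddCommGroup Y] [NormedSpace 𝕜 Y] [NormedAddCommGroup F] [NormedSpace 𝕜 F]

noncomputable def clmOfFamily (L : α → Y →L[𝕜] F) (hL : ∀ v, Continuous fun a => L a v)
    (C : ℝ≥0) (hC : ∀ a, ‖L a‖ ≤ C) : Y →L[𝕜] α →ᵇ F :=
  LinearMap.mkContinuous
    { toFun := fun v => ofNormedAddCommGroup (fun a => L a v) (hL v) (C * ‖v‖)
        fun a => (L a).le_of_opNorm_le (hC a) v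
      map_add' := fun v w => by ext a; simp
      map_smul' := fun k v => by ext a; simp }
    C fun v =>
      norm_ofNormedAddCommGroup_le _ (by positivity) fun a => (L a).le_of_opNorm_le (hC a) v

theorem clmOfFamily_apply_apply (L : α → Y →L[𝕜] F) (hL : ∀ v, Continuous fun a => L a v)
    (C : ℝ≥0) (hC : ∀ a, ‖L a‖ ≤ C) (v : Y) (a : α) : clmOfFamily L hL C hC v a = L a v :=
  rfl

variable {G : Y → α →ᵇ F} {L : α → Y →L[𝕜] F} {t₀ : Y}

theorem continuous_apply_of_uniformly_hasFDerivAt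
    (hG : ∀ ε > 0, ∀ᶠ h in 𝓝 (0 : Y), ∀ a, ‖G (t₀ + h) a - G t₀ a - L a h‖ ≤ ε * ‖h‖) (v : Y) :
    Continuous fun a => L a v := by
  let Q : 𝕜 → α → F := fun s a => s⁻¹ • (G (t₀ + s • v) a - G t₀ a)
  have hQ : TendstoUniformly Q (fun a => L a v) (𝓝[≠] 0) := by
    rw [Metric.tendstoUniformly_iff]
    intro ε hε
    have hsv : Tendsto (fun s : 𝕜 => s • v) (𝓝[≠] 0) (𝓝 0) := by
      refine Tendsto.mono_left ?_ nhdsWithin_le_nhds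
      simpa using (tendsto_id (x := 𝓝 (0 : 𝕜))).smul_const v
    filter_upwards [hsv.eventually (hG (ε / 2 / (‖v‖ + 1)) (by positivity)), self_mem_nhdsWithin]
      with s hs hs0 a
    have hquot : Q s a - L a v = s⁻¹ • (G (t₀ + s • v) a - G t₀ a - L a (s • v)) := by
      rw [map_smul, smul_sub, smul_smul, inv_mul_cancel₀ hs0, one_smul]
    rw [dist_comm, dist_eq_norm, hquot, norm_smul, norm_inv]
    calc ‖s‖⁻¹ * ‖G (t₀ + s • v) a - G t₀ a - L a (s • v)‖
        ≤ ‖s‖⁻¹ * (ε / 2 / (‖v‖ + 1) * ‖s • v‖) := by gcongr; exact hs a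
      _ = ε / 2 * (‖v‖ / (‖v‖ + 1)) := by
        rw [norm_smul]; field_simp [norm_ne_zero_iff.mpr hs0]
      _ < ε := by
        have : ‖v‖ / (‖v‖ + 1) < 1 := (div_lt_one (by positivity)).mpr (lt_add_one _)
        nlinarith
  exact hQ.continuous (Eventually.frequently (Eventually.of_forall fun s =>
    continuous_const.smul ((G _).continuous.sub (G t₀).continuous)))

theorem hasFDerivAt_of_uniformly_hasFDerivAt (C : ℝ≥0) (hC : ∀ a, ‖L a‖ ≤ C)
    (hG : ∀ ε > 0, ∀ᶠ h in 𝓝 (0 : Y), ∀ a, ‖G (t₀ + h) a - G t₀ a - L a h‖ ≤ ε * ‖h‖) :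
    HasFDerivAt G (clmOfFamily L (continuous_apply_of_uniformly_hasFDerivAt hG) C hC) t₀ := by
  rw [hasFDerivAt_iff_isLittleO_nhds_zero, Asymptotics.isLittleO_iff]
  intro ε hε
  filter_upwards [hG ε hε] with h hh
  exact (norm_le (by positivity)).mpr fun a => by
    simpa only [coe_sub, Pi.sub_apply, clmOfFamily_apply_apply] using hh a

end BoundedContinuousFunction

theorem earle_lemma_general
    {X Y : Type*} [NormedAddCommGroup X]
    [NormedAddCommGroup Y] [NormedSpace ℂ Y]
    {E : Set X} {T : Set Y} (hT : IsOpen T)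
    (φ : X → Y → ℂ) (M : ℝ)
    (hbound : ∀ x ∈ E, ∀ t ∈ T, ‖φ x t‖ ≤ M)
    (hholY : ∀ x ∈ E, DifferentiableOn ℂ (fun t => φ x t) T)
    (Φ : Y → BoundedContinuousFunction E ℂ)
    (hΦ : ∀ t ∈ T, ∀ x : E, Φ t x = φ (x : X) t) :
    DifferentiableOn ℂ Φ T := by
  intro t₀ ht₀
  obtain ⟨R, hR, hRT⟩ := isOpen_iff.mp hT t₀ ht₀
  have hd : ∀ x : E, DifferentiableOn ℂ (φ x) (ball t₀ R) := fun x => (hholY x x.2).mono hRT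
  have hM : ∀ x : E, ∀ t ∈ ball t₀ R, ‖φ x t‖ ≤ M := fun x t ht => hbound x x.2 t (hRT ht)
  refine (BoundedContinuousFunction.hasFDerivAt_of_uniformly_hasFDerivAt
    (L := fun x : E => fderiv ℂ (φ x) t₀) (2 * M / R).toNNReal
    (fun x => (Complex.norm_fderiv_le_of_forall_mem_ball_norm_le (hd x) hR (hM x)).trans
      (Real.le_coe_toNNReal _)) fun ε hε => ?_).differentiableAt.differentiableWithinAt
  have hsmall : Tendsto (fun h : Y => 4 * M / R ^ 2 * ‖h‖) (𝓝 0) (𝓝 0) := by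
    simpa using (tendsto_norm_zero (E := Y)).const_mul (4 * M / R ^ 2)
  filter_upwards [ball_mem_nhds (0 : Y) hR, hsmall.eventually (eventually_le_nhds hε)]
    with h hhR hhε x
  have hh : t₀ + h ∈ ball t₀ R := by simpa using hhR
  rw [hΦ _ (hRT hh), hΦ _ ht₀]
  calc ‖φ x (t₀ + h) - φ x t₀ - fderiv ℂ (φ x) t₀ h‖
      ≤ 4 * M * (‖h‖ / R) ^ 2 := by
        simpa [dist_eq_norm] using
          Complex.norm_sub_sub_fderiv_le_of_forall_mem_ball_norm_le (hd x) (hM x) hh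
    _ = 4 * M / R ^ 2 * ‖h‖ * ‖h‖ := by ring
    _ ≤ ε * ‖h‖ := by gcongr

/-- **Earle's lemma (Lemma 1 of the paper).**
Let `X`, `Y` be complex Banach spaces, `E ⊆ X`, `T ⊆ Y` open, and
`φ : E × T → ℂ` bounded, holomorphic in `x` for each fixed `t`, and holomorphic
in `t` for each fixed `x`.  Then the induced map `Φ : T → C_b(E, ℂ)`,
`Φ t = φ (·, t)`, into the Banach space of bounded continuous functions on `E`
with the sup norm, is holomorphic on `T`. -/
theorem earle_lemma
    {X Y : Type*} [NormedAddCommGroup X] [NormedSpace ℂ X] [CompleteSpace X]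
    [NormedAddCommGroup Y] [NormedSpace ℂ Y] [CompleteSpace Y]
    {E : Set X} {T : Set Y} (hE : IsOpen E) (hT : IsOpen T)
    (φ : X → Y → ℂ) (M : ℝ)
    (hbound : ∀ x ∈ E, ∀ t ∈ T, ‖φ x t‖ ≤ M)
    (hholX : ∀ t ∈ T, DifferentiableOn ℂ (fun x => φ x t) E)
    (hholY : ∀ x ∈ E, DifferentiableOn ℂ (fun t => φ x t) T)
    (Φ : Y → BoundedContinuousFunction E ℂ)
    (hΦ : ∀ t ∈ T, ∀ x : E, Φ t x = φ (x : X) t) :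
    DifferentiableOn ℂ Φ T :=
  earle_lemma_general hT φ M hbound hholY Φ hΦ
end

section
/- Let β : ℕ⁺ × ℕ⁺ → ℂ satisfy |β_{mn}| ≤ C for all m, n ≥ 1, and suppose K ≥ 0 is such that |Σ_{m,n≥1} β_{mn} x_m x_n| ≤ K for every finitely supported sequence x with Σ_{n≥1} |x_n|² ≤ 1. For 0 ≤ r < 1 define N(r) = sup{ |Σ_{m,n≥1} β_{mn} r^{m+n} x_m x_n| : x ∈ ℓ², Σ_{n≥1}|x_n|² ≤ 1 } (for such r and x the double series converges absolutely). Then N is nondecreasing on [0, 1), and N(r) ≤ K for all r ∈ [0, 1). -/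
/-- The Grunsky norm of the homotopy stretching: for a matrix `β` and
`0 ≤ r < 1`, `N(r)` is the supremum of `|Σ β_{mn} r^{m+n} x_m x_n|` over
sequences `x` in the unit ball of `ℓ²`. -/
noncomputable def grunskyHomotopyNorm (β : ℕ+ → ℕ+ → ℂ) (r : ℝ) : ℝ :=
  sSup {s : ℝ | ∃ x : ℕ+ → ℂ,
    (Summable fun n : ℕ+ => ‖x n‖ ^ 2) ∧ (∑' n : ℕ+, ‖x n‖ ^ 2) ≤ 1 ∧
    s = ‖∑' p : ℕ+ × ℕ+,
      β p.1 p.2 * (r : ℂ) ^ ((p.1 : ℕ) + (p.2 : ℕ)) * x p.1 * x p.2‖}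

section Aux

variable {β : ℕ+ → ℕ+ → ℂ} {C K : ℝ}

/-- Absolute convergence of the double series. -/
lemma grunsky_aux_summable (hC : ∀ m n : ℕ+, ‖β m n‖ ≤ C) {r : ℝ}
    (hr0 : 0 ≤ r) (hr1 : r < 1) (x : ℕ+ → ℂ)
    (hx : Summable fun n : ℕ+ => ‖x n‖ ^ 2) :
    Summable fun p : ℕ+ × ℕ+ =>
      ‖β p.1 p.2 * (r : ℂ) ^ ((p.1 : ℕ) + (p.2 : ℕ)) * x p.1 * x p.2‖ := by
  have hC0 : 0 ≤ C := le_trans (norm_nonneg _) (hC 1 1)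
  set g : ℕ+ → ℝ := fun n => r ^ (n : ℕ) * ‖x n‖ with hg_def
  have hgeo : Summable fun n : ℕ+ => (r ^ 2) ^ (n : ℕ) := by
    have : Summable fun k : ℕ => (r ^ 2) ^ k :=
      summable_geometric_of_lt_one (by positivity) (by nlinarith)
    exact this.comp_injective (fun a b h => PNat.coe_injective h)
  have hg : Summable g := by
    refine Summable.of_nonneg_of_le (fun n => by positivity)
      (fun n => ?_) ((hgeo.add hx).div_const 2)
    have h1 : (r ^ 2) ^ (n : ℕ) = (r ^ (n : ℕ)) ^ 2 := by
      rw [← pow_mul, ← pow_mul, Nat.mul_comm]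
    have h2 := sq_nonneg (r ^ (n : ℕ) - ‖x n‖)
    simp only [hg_def]
    nlinarith [h2]
  have hprod : Summable fun p : ℕ+ × ℕ+ => g p.1 * g p.2 :=
    hg.mul_of_nonneg hg (fun n => by positivity) (fun n => by positivity)
  refine Summable.of_nonneg_of_le (fun p => norm_nonneg _) (fun p => ?_)
    (hprod.mul_left C)
  have hnorm : ‖β p.1 p.2 * (r : ℂ) ^ ((p.1 : ℕ) + (p.2 : ℕ)) * x p.1 * x p.2‖
      = ‖β p.1 p.2‖ * (r ^ (p.1 : ℕ) * ‖x p.1‖) * (r ^ (p.2 : ℕ) * ‖x p.2‖) := by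
    simp only [norm_mul, norm_pow, Complex.norm_real, Real.norm_eq_abs,
      abs_of_nonneg hr0, pow_add]
    ring
  rw [hnorm]
  have hfac : 0 ≤ (r ^ (p.1 : ℕ) * ‖x p.1‖) * (r ^ (p.2 : ℕ) * ‖x p.2‖) := by positivity
  calc ‖β p.1 p.2‖ * (r ^ (p.1 : ℕ) * ‖x p.1‖) * (r ^ (p.2 : ℕ) * ‖x p.2‖)
      = ‖β p.1 p.2‖ * ((r ^ (p.1 : ℕ) * ‖x p.1‖) * (r ^ (p.2 : ℕ) * ‖x p.2‖)) := by ring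
    _ ≤ C * ((r ^ (p.1 : ℕ) * ‖x p.1‖) * (r ^ (p.2 : ℕ) * ‖x p.2‖)) :=
        mul_le_mul_of_nonneg_right (hC _ _) hfac
    _ = C * (g p.1 * g p.2) := by simp only [hg_def]

/-- Every element of the defining set is at most `K`. -/
lemma grunsky_aux_bound (hC : ∀ m n : ℕ+, ‖β m n‖ ≤ C)
    (hβ : ∀ x : ℕ+ →₀ ℂ, (∑ n ∈ x.support, ‖x n‖ ^ 2) ≤ 1 →
      ‖∑ m ∈ x.support, ∑ n ∈ x.support, β m n * x m * x n‖ ≤ K)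
    {r : ℝ} (hr0 : 0 ≤ r) (hr1 : r < 1) (x : ℕ+ → ℂ)
    (hx : Summable fun n : ℕ+ => ‖x n‖ ^ 2) (hx1 : (∑' n : ℕ+, ‖x n‖ ^ 2) ≤ 1) :
    ‖∑' p : ℕ+ × ℕ+,
      β p.1 p.2 * (r : ℂ) ^ ((p.1 : ℕ) + (p.2 : ℕ)) * x p.1 * x p.2‖ ≤ K := by
  set f : ℕ+ × ℕ+ → ℂ := fun p =>
    β p.1 p.2 * (r : ℂ) ^ ((p.1 : ℕ) + (p.2 : ℕ)) * x p.1 * x p.2 with hf_def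
  have hfs : Summable f := (grunsky_aux_summable hC hr0 hr1 x hx).of_norm
  have hHasSum : HasSum f (∑' p, f p) := hfs.hasSum
  -- the net of square partial sums tends to the tsum
  have hsq : Filter.Tendsto (fun F : Finset ℕ+ => F ×ˢ F) Filter.atTop Filter.atTop := by
    refine Filter.tendsto_atTop_atTop.2 fun S => ⟨S.image Prod.fst ∪ S.image Prod.snd,
      fun F hF => fun p hp => ?_⟩
    have h1 : p.1 ∈ F := hF (Finset.mem_union_left _ (Finset.mem_image_of_mem _ hp))
    have h2 : p.2 ∈ F := hF (Finset.mem_union_right _ (Finset.mem_image_of_mem _ hp))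
    exact Finset.mem_product.2 ⟨h1, h2⟩
  have htend : Filter.Tendsto (fun F : Finset ℕ+ => ‖∑ p ∈ F ×ˢ F, f p‖)
      Filter.atTop (nhds ‖∑' p, f p‖) :=
    (continuous_norm.continuousAt.tendsto.comp (hHasSum.comp hsq))
  refine le_of_tendsto htend (Filter.Eventually.of_forall fun F => ?_)
  -- bound each square partial sum using `hβ`
  set w : ℕ+ → ℂ := fun n => if n ∈ F then (r : ℂ) ^ (n : ℕ) * x n else 0 with hw_def
  have hwsupp : ∀ a : ℕ+, w a ≠ 0 → a ∈ F := by
    intro a ha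
    by_contra h
    exact ha (if_neg h)
  set z : ℕ+ →₀ ℂ := Finsupp.onFinset F w hwsupp with hz_def
  have hzapp : ∀ n, z n = w n := fun n => rfl
  have hsupp : z.support ⊆ F := Finsupp.support_onFinset_subset
  -- the ℓ² bound for z
  have hzbound : (∑ n ∈ z.support, ‖z n‖ ^ 2) ≤ 1 := by
    have h1 : (∑ n ∈ z.support, ‖z n‖ ^ 2) ≤ ∑ n ∈ F, ‖z n‖ ^ 2 :=
      Finset.sum_le_sum_of_subset_of_nonneg hsupp (fun n _ _ => by positivity)
    have h2 : (∑ n ∈ F, ‖z n‖ ^ 2) ≤ ∑ n ∈ F, ‖x n‖ ^ 2 := by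
      refine Finset.sum_le_sum fun n hn => ?_
      rw [hzapp, hw_def]
      simp only [if_pos hn, norm_mul, norm_pow, Complex.norm_real, Real.norm_eq_abs,
        abs_of_nonneg hr0, mul_pow]
      have hrle : (r ^ (n : ℕ)) ^ 2 ≤ 1 := by
        have : r ^ (n : ℕ) ≤ 1 := pow_le_one₀ hr0 hr1.le
        nlinarith [pow_nonneg hr0 (n : ℕ)]
      nlinarith [sq_nonneg ‖x n‖, norm_nonneg (x n)]
    have h3 : (∑ n ∈ F, ‖x n‖ ^ 2) ≤ ∑' n : ℕ+, ‖x n‖ ^ 2 :=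
      Summable.sum_le_tsum F (fun n _ => by positivity) hx
    linarith
  have hKbound := hβ z hzbound
  -- identify the double sum over the support with the square partial sum
  have hdouble : (∑ m ∈ z.support, ∑ n ∈ z.support, β m n * z m * z n)
      = ∑ p ∈ F ×ˢ F, f p := by
    rw [← Finset.sum_product']
    have hsub : (z.support ×ˢ z.support : Finset (ℕ+ × ℕ+)) ⊆ F ×ˢ F :=
      Finset.product_subset_product hsupp hsupp
    rw [Finset.sum_subset hsub]
    · refine Finset.sum_congr rfl fun p hp => ?_
      obtain ⟨h1, h2⟩ := Finset.mem_product.1 hp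
      rw [hzapp, hzapp, hw_def]
      simp only [if_pos h1, if_pos h2, hf_def, pow_add]
      ring
    · intro p hpF hpns
      have hns : p.1 ∉ z.support ∨ p.2 ∉ z.support := by
        by_contra hcon
        push_neg at hcon
        exact hpns (Finset.mem_product.2 ⟨hcon.1, hcon.2⟩)
      rcases hns with h | h
      · rw [Finsupp.notMem_support_iff.1 h]
        ring
      · rw [Finsupp.notMem_support_iff.1 h]
        ring
  rw [hdouble] at hKbound
  exact hKbound

/-- The defining set is nonempty (contains `0`). -/
lemma grunsky_aux_zero_mem (β : ℕ+ → ℕ+ → ℂ) (r : ℝ) :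
    (0 : ℝ) ∈ {s : ℝ | ∃ x : ℕ+ → ℂ,
      (Summable fun n : ℕ+ => ‖x n‖ ^ 2) ∧ (∑' n : ℕ+, ‖x n‖ ^ 2) ≤ 1 ∧
      s = ‖∑' p : ℕ+ × ℕ+,
        β p.1 p.2 * (r : ℂ) ^ ((p.1 : ℕ) + (p.2 : ℕ)) * x p.1 * x p.2‖} := by
  refine ⟨0, by simp [summable_zero], by simp, ?_⟩
  simp

end Aux

/-- **Monotonicity and boundedness of the Grunsky norm along the homotopy
(Section 1.4 of the paper).**  If `|β_{mn}| ≤ C` and the quadratic form of `β`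
is bounded by `K` on the unit ball of finitely supported sequences, then for
`0 ≤ r < 1` the double series defining `N(r)` converges absolutely, and `N` is
nondecreasing on `[0,1)` with `N(r) ≤ K`. -/
theorem grunskyHomotopyNorm_monotone_le
    (β : ℕ+ → ℕ+ → ℂ) (C K : ℝ) (hC : ∀ m n : ℕ+, ‖β m n‖ ≤ C) (hK : 0 ≤ K)
    (hβ : ∀ x : ℕ+ →₀ ℂ, (∑ n ∈ x.support, ‖x n‖ ^ 2) ≤ 1 →
      ‖∑ m ∈ x.support, ∑ n ∈ x.support, β m n * x m * x n‖ ≤ K) :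
    (∀ r ∈ Set.Ico (0 : ℝ) 1, ∀ x : ℕ+ → ℂ,
      (Summable fun n : ℕ+ => ‖x n‖ ^ 2) → (∑' n : ℕ+, ‖x n‖ ^ 2) ≤ 1 →
      Summable fun p : ℕ+ × ℕ+ =>
        ‖β p.1 p.2 * (r : ℂ) ^ ((p.1 : ℕ) + (p.2 : ℕ)) * x p.1 * x p.2‖) ∧
    MonotoneOn (grunskyHomotopyNorm β) (Set.Ico 0 1) ∧
    ∀ r ∈ Set.Ico (0 : ℝ) 1, grunskyHomotopyNorm β r ≤ K := by
  have hmem_le : ∀ r ∈ Set.Ico (0 : ℝ) 1, ∀ s ∈ {s : ℝ | ∃ x : ℕ+ → ℂ,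
      (Summable fun n : ℕ+ => ‖x n‖ ^ 2) ∧ (∑' n : ℕ+, ‖x n‖ ^ 2) ≤ 1 ∧
      s = ‖∑' p : ℕ+ × ℕ+,
        β p.1 p.2 * (r : ℂ) ^ ((p.1 : ℕ) + (p.2 : ℕ)) * x p.1 * x p.2‖}, s ≤ K := by
    rintro r ⟨hr0, hr1⟩ s ⟨x, hx, hx1, rfl⟩
    exact grunsky_aux_bound hC hβ hr0 hr1 x hx hx1
  refine ⟨?_, ?_, ?_⟩
  · rintro r ⟨hr0, hr1⟩ x hx _
    exact grunsky_aux_summable hC hr0 hr1 x hx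
  · rintro r ⟨hr0, hr1⟩ r' ⟨hr'0, hr'1⟩ hrr'
    rcases eq_or_lt_of_le hr'0 with h0 | h0
    · have : r = r' := le_antisymm hrr' (h0 ▸ hr0)
      rw [this]
    · -- r' > 0
      unfold grunskyHomotopyNorm
      refine csSup_le_csSup ⟨K, fun s hs => hmem_le r' ⟨hr'0, hr'1⟩ s hs⟩
        ⟨0, grunsky_aux_zero_mem β r⟩ ?_
      rintro s ⟨x, hx, hx1, rfl⟩
      set t : ℝ := r / r' with ht_def
      have ht0 : 0 ≤ t := div_nonneg hr0 hr'0
      have ht1 : t ≤ 1 := div_le_one_of_le₀ hrr' hr'0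
      set y : ℕ+ → ℂ := fun n => ((t : ℂ)) ^ (n : ℕ) * x n with hy_def
      have hynorm : ∀ n : ℕ+, ‖y n‖ ^ 2 ≤ ‖x n‖ ^ 2 := by
        intro n
        simp only [hy_def, norm_mul, norm_pow, Complex.norm_real, Real.norm_eq_abs,
          abs_of_nonneg ht0, mul_pow]
        have h1 : (t ^ (n : ℕ)) ^ 2 ≤ 1 := by
          have : t ^ (n : ℕ) ≤ 1 := pow_le_one₀ ht0 ht1
          nlinarith [pow_nonneg ht0 (n : ℕ)]
        nlinarith [sq_nonneg ‖x n‖, norm_nonneg (x n)]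
      have hy_summable : Summable fun n : ℕ+ => ‖y n‖ ^ 2 :=
        Summable.of_nonneg_of_le (fun n => by positivity) hynorm hx
      have hy1 : (∑' n : ℕ+, ‖y n‖ ^ 2) ≤ 1 :=
        le_trans (Summable.tsum_le_tsum hynorm hy_summable hx) hx1
      refine ⟨y, hy_summable, hy1, ?_⟩
      congr 1
      refine tsum_congr fun p => ?_
      have hne : (r' : ℂ) ≠ 0 := by exact_mod_cast ne_of_gt h0
      have hkey : (r' : ℂ) * (t : ℂ) = (r : ℂ) := by
        rw [ht_def]
        push_cast
        rw [mul_comm]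
        exact div_mul_cancel₀ _ hne
      simp only [hy_def, pow_add]
      calc β p.1 p.2 * ((r : ℂ) ^ (p.1 : ℕ) * (r : ℂ) ^ (p.2 : ℕ)) * x p.1 * x p.2
          = β p.1 p.2 * (((r' : ℂ) * (t : ℂ)) ^ (p.1 : ℕ) *
            ((r' : ℂ) * (t : ℂ)) ^ (p.2 : ℕ)) * x p.1 * x p.2 := by rw [hkey]
        _ = β p.1 p.2 * ((r' : ℂ) ^ (p.1 : ℕ) * (r' : ℂ) ^ (p.2 : ℕ)) *
            ((t : ℂ) ^ (p.1 : ℕ) * x p.1) * ((t : ℂ) ^ (p.2 : ℕ) * x p.2) := by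
            rw [mul_pow, mul_pow]; ring
  · intro r hr
    exact Real.sSup_le (hmem_le r hr) hK
end
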